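/- Incremental closure under hyperedge insertion: let H = (V, F), A ⊆ V, C = cl_H(A), and let e = (S,T) be a new hyperarc with H' = (V, F ∪ {e}). If S ⊆ C then cl_{H'}(A) = cl_H(A ∪ T); if S ⊄ C then cl_{H'}(A) = cl_H(A). -/
import Mathlib


/-- A hyperarc is a pair (tail, head); a hypergraph is a set of hyperarcs. -/
def HClosed {V : Type*} (F : Set (Set V × Set V)) (C : Set V) : Prop :=
  ∀ e ∈ F, e.1 ⊆ C → e.2 ⊆ C

/-- The closure of `A`: intersection of all closed supersets of `A`. -/
def hcl {V : Type*} (F : Set (Set V × Set V)) (A : Set V) : Set V :=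
  ⋂₀ {C | A ⊆ C ∧ HClosed F C}

lemma hcl_subset {V : Type*} {F : Set (Set V × Set V)} {A C : Set V}
    (hA : A ⊆ C) (hC : HClosed F C) : hcl F A ⊆ C :=
  Set.sInter_subset_of_mem ⟨hA, hC⟩

lemma subset_hcl {V : Type*} (F : Set (Set V × Set V)) (A : Set V) : A ⊆ hcl F A :=
  fun _ hx => Set.mem_sInter.2 fun _ hC => hC.1 hx

lemma hcl_closed {V : Type*} (F : Set (Set V × Set V)) (A : Set V) :
    HClosed F (hcl F A) := by
  intro f hf hsub x hx
  refine Set.mem_sInter.2 fun C hC => ?_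
  exact hC.2 f hf (fun y hy => Set.mem_sInter.1 (hsub hy) C hC) hx

lemma hcl_mono_F {V : Type*} {F G : Set (Set V × Set V)} (h : F ⊆ G) (A : Set V) :
    hcl F A ⊆ hcl G A :=
  hcl_subset (subset_hcl G A) fun f hf => hcl_closed G A f (h hf)

/-- Incremental closure maintenance under hyperedge insertion. -/
theorem incremental_insertion {V : Type*}
    (F : Set (Set V × Set V)) (A : Set V) (e : Set V × Set V) :
    (e.1 ⊆ hcl F A → hcl (insert e F) A = hcl F (A ∪ e.2)) ∧
      (¬ e.1 ⊆ hcl F A → hcl (insert e F) A = hcl F A) := by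
  constructor
  · intro h
    apply Set.Subset.antisymm
    · -- hcl (insert e F) A ⊆ hcl F (A ∪ e.2)
      refine hcl_subset (Set.subset_union_left.trans (subset_hcl F (A ∪ e.2))) ?_
      intro f hf
      rcases hf with rfl | hf
      · intro _
        exact Set.subset_union_right.trans (subset_hcl F (A ∪ f.2))
      · exact hcl_closed F (A ∪ e.2) f hf
    · -- hcl F (A ∪ e.2) ⊆ hcl (insert e F) A
      refine hcl_subset (Set.union_subset (subset_hcl _ A) ?_) ?_
      · exact (hcl_closed (insert e F) A e (Set.mem_insert _ _))
          ((h.trans (hcl_mono_F (Set.subset_insert e F) A)))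
      · exact fun f hf => hcl_closed (insert e F) A f (Set.mem_insert_iff.2 (Or.inr hf))
  · intro h
    apply Set.Subset.antisymm
    · refine hcl_subset (subset_hcl F A) ?_
      intro f hf
      rcases hf with rfl | hf
      · exact fun hs => absurd hs h
      · exact hcl_closed F A f hf
    · exact hcl_mono_F (Set.subset_insert e F) A
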